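/- arXiv:2211.12763 — 7 statements merged into one kernel-verified Lean document; each statement's English description precedes it below -/
import Mathlib

section
/- If (X, μ) is a measure space such that L^∞(X, μ) is infinite dimensional, then L^∞(X, μ) contains a (complex) subalgebra that is not closed under complex conjugation. -/
open MeasureTheory

namespace NonSA


variable {X : Type*} [MeasurableSpace X] {μ : Measure X}

def MAtom (μ : Measure X) (A : Set X) : Prop :=
  MeasurableSet A ∧ 0 < μ A ∧ ∀ T, MeasurableSet T → T ⊆ A → μ T = 0 ∨ μ (A \ T) = 0

lemma exists_const_of_atom {A : Set X} (hA : MAtom μ A) {f : X → ℂ} (hf : Measurable f) :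
    ∃ c : ℂ, ∀ᵐ x ∂μ, x ∈ A → f x = c := by
  obtain ⟨hAm, hApos, hAatom⟩ := hA
  -- countable dense family
  set D : ℚ × ℚ → ℂ := fun q => (q.1 : ℝ) + (q.2 : ℝ) * Complex.I with hD
  have hcover : ∀ (ε : ℝ), 0 < ε → ∀ z : ℂ, ∃ q, z ∈ Metric.ball (D q) ε := by
    intro ε hε z
    obtain ⟨q1, hq1, hq1'⟩ := exists_rat_btwn (show z.re - ε/2 < z.re by linarith)
    obtain ⟨q2, hq2, hq2'⟩ := exists_rat_btwn (show z.im - ε/2 < z.im by linarith)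
    refine ⟨(q1, q2), ?_⟩
    rw [Metric.mem_ball, Complex.dist_eq]
    calc ‖z - D (q1, q2)‖ ≤ |(z - D (q1, q2)).re| + |(z - D (q1, q2)).im| :=
          Complex.norm_le_abs_re_add_abs_im _
      _ < ε := by
          simp only [hD, Complex.sub_re, Complex.sub_im, Complex.add_re, Complex.add_im,
            Complex.mul_re, Complex.mul_im, Complex.ofReal_re, Complex.ofReal_im,
            Complex.I_re, Complex.I_im]
          have h1 : |z.re - (q1 : ℝ)| < ε / 2 := by rw [abs_lt]; constructor <;> linarith
          have h2 : |z.im - (q2 : ℝ)| < ε / 2 := by rw [abs_lt]; constructor <;> linarith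
          calc |z.re - ((q1:ℝ) + ((q2:ℝ) * 0 - 0 * 1))| + |z.im - (0 + ((q2:ℝ) * 1 + 0 * 0))|
              = |z.re - (q1 : ℝ)| + |z.im - (q2 : ℝ)| := by ring_nf
            _ < ε := by linarith
  have claim1 : ∀ (ε : ℝ), 0 < ε → ∃ z : ℂ, μ (A \ f ⁻¹' Metric.ball z ε) = 0 := by
    intro ε hε
    by_contra hno
    push_neg at hno
    have hq : ∀ q : ℚ × ℚ, μ (A ∩ f ⁻¹' Metric.ball (D q) ε) = 0 := by
      intro q
      rcases hAatom (A ∩ f ⁻¹' Metric.ball (D q) ε)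
        (hAm.inter (hf measurableSet_ball)) Set.inter_subset_left with h0 | h0
      · exact h0
      · exact absurd (by rwa [Set.diff_self_inter] at h0) (hno (D q))
    have hsub : A ⊆ ⋃ q : ℚ × ℚ, A ∩ f ⁻¹' Metric.ball (D q) ε := by
      intro x hx
      obtain ⟨q, hq'⟩ := hcover ε hε (f x)
      exact Set.mem_iUnion.mpr ⟨q, hx, hq'⟩
    have : μ A = 0 := measure_mono_null hsub (measure_iUnion_null hq)
    exact absurd this hApos.ne'
  have hz : ∀ m : ℕ, ∃ z : ℂ, μ (A \ f ⁻¹' Metric.ball z (1 / (m + 1))) = 0 := fun m =>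
    claim1 _ (by positivity)
  choose z hzn using hz
  set N : Set X := ⋃ m : ℕ, A \ f ⁻¹' Metric.ball (z m) (1 / (m + 1)) with hN
  have hNnull : μ N = 0 := measure_iUnion_null hzn
  have hGpos : 0 < μ (A \ N) := by rwa [measure_diff_null hNnull]
  obtain ⟨x₀, hx₀⟩ := nonempty_of_measure_ne_zero hGpos.ne'
  have key : ∀ x, x ∈ A \ N → f x = f x₀ := by
    intro x hx
    have hdist : ∀ m : ℕ, dist (f x) (f x₀) ≤ 2 * (1 / (m + 1)) := by
      intro m
      have h1 : f x ∈ Metric.ball (z m) (1 / (m + 1)) := by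
        by_contra hc
        exact hx.2 (Set.mem_iUnion.mpr ⟨m, hx.1, hc⟩)
      have h2 : f x₀ ∈ Metric.ball (z m) (1 / (m + 1)) := by
        by_contra hc
        exact hx₀.2 (Set.mem_iUnion.mpr ⟨m, hx₀.1, hc⟩)
      rw [Metric.mem_ball] at h1 h2
      calc dist (f x) (f x₀) ≤ dist (f x) (z m) + dist (z m) (f x₀) := dist_triangle _ _ _
        _ ≤ 2 * (1 / (m + 1)) := by rw [dist_comm (z m)]; linarith
    have hle : dist (f x) (f x₀) ≤ 0 := by
      have htend : Filter.Tendsto (fun m : ℕ => 2 * (1 / (m + 1) : ℝ)) Filter.atTop (nhds 0) := by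
        simpa using tendsto_one_div_add_atTop_nhds_zero_nat.const_mul (2 : ℝ)
      exact ge_of_tendsto htend (Filter.Eventually.of_forall hdist)
    exact dist_le_zero.mp hle
  refine ⟨f x₀, ?_⟩
  have : ∀ᵐ x ∂μ, x ∉ N := by
    rw [← measure_eq_zero_iff_ae_notMem] at *
    exact hNnull
  filter_upwards [this] with x hx hxA
  exact key x ⟨hxA, hx⟩


lemma exists_atom_subset
    (h : ¬ ∃ E : ℕ → Set X, (∀ n, MeasurableSet (E n)) ∧ (∀ n, 0 < μ (E n)) ∧
      Pairwise (Function.onFun Disjoint E))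
    {S : Set X} (hS : MeasurableSet S) (hpos : 0 < μ S) :
    ∃ A, A ⊆ S ∧ MAtom μ A := by
  by_contra hno
  push_neg at hno
  -- every positive measure measurable subset of S can be split
  have step : ∀ T : Set X, MeasurableSet T → T ⊆ S → 0 < μ T →
      ∃ U, MeasurableSet U ∧ U ⊆ T ∧ 0 < μ U ∧ 0 < μ (T \ U) := by
    intro T hTm hTS hTpos
    have := hno T hTS
    rw [MAtom] at this
    push_neg at this
    obtain ⟨U, hUm, hUT, hU1, hU2⟩ := this hTm hTpos
    exact ⟨U, hUm, hUT, pos_iff_ne_zero.mpr hU1, pos_iff_ne_zero.mpr hU2⟩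
  -- recursive construction
  classical
  let P : Set X → Prop := fun T => MeasurableSet T ∧ T ⊆ S ∧ 0 < μ T
  let next : {T : Set X // P T} → {T : Set X // P T} := fun T =>
    ⟨T.1 \ (step T.1 T.2.1 T.2.2.1 T.2.2.2).choose,
      ⟨T.2.1.diff (step T.1 T.2.1 T.2.2.1 T.2.2.2).choose_spec.1,
       fun x hx => T.2.2.1 hx.1,
       (step T.1 T.2.1 T.2.2.1 T.2.2.2).choose_spec.2.2.2⟩⟩
  let g : ℕ → {T : Set X // P T} := fun n => next^[n] ⟨S, hS, le_refl S, hpos⟩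
  have hgsucc : ∀ n, g (n + 1) = next (g n) := fun n => Function.iterate_succ_apply' _ _ _
  have hsub : ∀ n, (g (n + 1)).1 ⊆ (g n).1 := by
    intro n
    rw [hgsucc n]
    exact fun x hx => hx.1
  have hanti : ∀ {n m}, n ≤ m → (g m).1 ⊆ (g n).1 := by
    intro n m hnm
    induction hnm with
    | refl => exact subset_rfl
    | step _ ih => exact ih.trans' (hsub _)
  have hEpos : ∀ n, 0 < μ ((g n).1 \ (g (n + 1)).1) := by
    intro n
    have h1 := (step (g n).1 (g n).2.1 (g n).2.2.1 (g n).2.2.2).choose_spec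
    refine lt_of_lt_of_le h1.2.2.1 (measure_mono ?_)
    rw [hgsucc n]
    intro x hx
    exact ⟨h1.2.1 hx, fun hc => hc.2 hx⟩
  refine h ⟨fun n => (g n).1 \ (g (n + 1)).1, fun n => (g n).2.1.diff (g (n + 1)).2.1,
    hEpos, ?_⟩
  have key : ∀ {n m}, n < m → Disjoint ((g n).1 \ (g (n + 1)).1) ((g m).1 \ (g (m + 1)).1) := by
    intro n m hnm
    refine Set.disjoint_left.mpr fun x hx hx' => ?_
    exact hx.2 (hanti hnm hx'.1)
  intro n m hnm
  rcases lt_or_gt_of_ne hnm with h' | h'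
  · exact key h'
  · exact (key h').symm


lemma coeFn_finset_sum {ι : Type*} (s : Finset ι) (F : ι → Lp ℂ ⊤ μ) :
    (↑↑(∑ i ∈ s, F i) : X → ℂ) =ᵐ[μ] fun x => ∑ i ∈ s, (F i : X → ℂ) x := by
  classical
  induction s using Finset.induction_on with
  | empty => simp only [Finset.sum_empty]; exact Lp.coeFn_zero (E := ℂ) (p := ⊤) (μ := μ)
  | insert a s' hnot ih =>
    rw [Finset.sum_insert hnot]
    filter_upwards [Lp.coeFn_add (∑ i ∈ s', F i) (F a), ih] with x hx1 hx2
    rw [Finset.sum_insert hnot, add_comm (F a)]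
    simp only [hx1, Pi.add_apply, hx2]
    ring

lemma finiteDimensional_of_no_family
    (h : ¬ ∃ E : ℕ → Set X, (∀ n, MeasurableSet (E n)) ∧ (∀ n, 0 < μ (E n)) ∧
      Pairwise (Function.onFun Disjoint E)) :
    FiniteDimensional ℂ (Lp ℂ ⊤ μ) := by
  classical
  let next : {T : Set X // MeasurableSet T} → {T : Set X // MeasurableSet T} := fun T =>
    if hp : 0 < μ T.1 then
      ⟨T.1 \ (exists_atom_subset h T.2 hp).choose,
        T.2.diff (exists_atom_subset h T.2 hp).choose_spec.2.1⟩
    else T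
  let R : ℕ → {T : Set X // MeasurableSet T} := fun n => next^[n] ⟨Set.univ, .univ⟩
  have hRsucc : ∀ n, R (n + 1) = next (R n) := fun n => Function.iterate_succ_apply' _ _ _
  have hstep : ∀ T : {T : Set X // MeasurableSet T}, 0 < μ T.1 →
      ∃ A, A ⊆ T.1 ∧ MAtom μ A ∧ (next T).1 = T.1 \ A := by
    intro T hp
    refine ⟨(exists_atom_subset h T.2 hp).choose,
      (exists_atom_subset h T.2 hp).choose_spec.1,
      (exists_atom_subset h T.2 hp).choose_spec.2, ?_⟩
    simp only [next, dif_pos hp]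
  have hstep0 : ∀ T : {T : Set X // MeasurableSet T}, ¬ 0 < μ T.1 → next T = T := by
    intro T hp; simp only [next, dif_neg hp]
  have hsub : ∀ n, (R (n + 1)).1 ⊆ (R n).1 := by
    intro n
    rw [hRsucc n]
    by_cases hp : 0 < μ (R n).1
    · obtain ⟨A, _, _, he⟩ := hstep (R n) hp
      rw [he]; exact Set.diff_subset
    · rw [hstep0 (R n) hp]
  have hanti : ∀ {n m}, n ≤ m → (R m).1 ⊆ (R n).1 := by
    intro n m hnm
    induction hnm with
    | refl => exact subset_rfl
    | step _ ih => exact ih.trans' (hsub _)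
  set D : ℕ → Set X := fun k => (R k).1 \ (R (k + 1)).1 with hD
  have hDm : ∀ k, MeasurableSet (D k) := fun k => (R k).2.diff (R (k + 1)).2
  have hDatom : ∀ k, 0 < μ (R k).1 → MAtom μ (D k) := by
    intro k hp
    obtain ⟨A, hAsub, hAatom, he⟩ := hstep (R k) hp
    have : D k = A := by
      rw [hD]
      simp only [hRsucc k, he, Set.diff_diff_right_self]
      exact Set.inter_eq_self_of_subset_right hAsub
    rwa [this]
  have hDdisj : ∀ {j k}, j < k → Disjoint (D j) (D k) := by
    intro j k hjk
    refine Set.disjoint_left.mpr fun x hx hx' => ?_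
    exact hx.2 (hanti hjk hx'.1)
  -- there must be a null remainder
  have hex : ∃ n, μ (R n).1 = 0 := by
    by_contra hall
    push_neg at hall
    refine h ⟨D, hDm, fun n => ?_, ?_⟩
    · have hp := pos_iff_ne_zero.mpr (hall n)
      exact (hDatom n hp).2.1
    · intro n m hnm
      rcases lt_or_gt_of_ne hnm with h' | h'
      · exact hDdisj h'
      · exact (hDdisj h').symm
  obtain ⟨n₀, hn₀⟩ := hex
  -- the D's cover univ up to R n₀
  have huniv : ∀ n, (Set.univ : Set X) = (⋃ k ∈ Finset.range n, D k) ∪ (R n).1 := by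
    intro n
    induction n with
    | zero => simp [R]
    | succ n ih =>
      rw [ih]
      have : (R n).1 = D n ∪ (R (n + 1)).1 := by
        rw [hD]
        exact (Set.diff_union_of_subset (hsub n)).symm
      rw [this]
      ext x
      simp only [Set.mem_union, Set.mem_iUnion, Finset.mem_range]
      constructor
      · rintro (⟨k, hk, hx⟩ | (hx | hx))
        · exact Or.inl ⟨k, Nat.lt_succ_of_lt hk, hx⟩
        · exact Or.inl ⟨n, Nat.lt_succ_self n, hx⟩
        · exact Or.inr hx
      · rintro (⟨k, hk, hx⟩ | hx)
        · rcases Nat.lt_succ_iff_lt_or_eq.mp hk with hk' | rfl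
          · exact Or.inl ⟨k, hk', hx⟩
          · exact Or.inr (Or.inl hx)
        · exact Or.inr (Or.inr hx)
  -- the indicator elements
  have hχmem : ∀ k, MemLp ((D k).indicator (fun _ => (1 : ℂ))) ⊤ μ := by
    intro k
    refine memLp_top_of_bound (measurable_const.indicator (hDm k)).aestronglyMeasurable 1
      (Filter.Eventually.of_forall fun x => ?_)
    rw [Set.indicator_apply]
    split <;> simp
  let χ : ℕ → Lp ℂ ⊤ μ := fun k => (hχmem k).toLp _
  -- every element is a combination of the χ's
  have hspan : ∀ g : Lp ℂ ⊤ μ, ∃ cc : ℕ → ℂ, g = ∑ k ∈ Finset.range n₀, cc k • χ k := by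
    intro g
    have hgm := (Lp.aestronglyMeasurable g).aemeasurable
    set f : X → ℂ := hgm.mk _ with hf
    have hfm : Measurable f := hgm.measurable_mk
    have hgf : (↑↑g : X → ℂ) =ᵐ[μ] f := hgm.ae_eq_mk
    have hc : ∀ k, ∃ ck : ℂ, ∀ᵐ x ∂μ, x ∈ D k → f x = ck := by
      intro k
      by_cases hp : 0 < μ (R k).1
      · exact exists_const_of_atom (hDatom k hp) hfm
      · refine ⟨0, ?_⟩
        have hnull : μ (D k) = 0 := by
          have : μ (D k) ≤ μ (R k).1 := measure_mono Set.diff_subset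
          simp only [not_lt, le_zero_iff] at hp
          exact le_antisymm (hp ▸ this) (by simp)
        have := (measure_eq_zero_iff_ae_notMem (μ := μ)).mp hnull
        filter_upwards [this] with x hx hx'
        exact absurd hx' hx
    choose cc hcc using hc
    refine ⟨cc, Lp.ext ?_⟩
    have hsm : ∀ k, (↑↑(cc k • χ k) : X → ℂ) =ᵐ[μ]
        fun x => cc k * (D k).indicator (fun _ => (1 : ℂ)) x := by
      intro k
      filter_upwards [Lp.coeFn_smul (cc k) (χ k), (hχmem k).coeFn_toLp] with x hx1 hx2
      rw [hx1, Pi.smul_apply, smul_eq_mul]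
      exact congrArg _ hx2
    have hR0 : ∀ᵐ x ∂μ, x ∉ (R n₀).1 := (measure_eq_zero_iff_ae_notMem (μ := μ)).mp hn₀
    filter_upwards [hgf, coeFn_finset_sum (Finset.range n₀) (fun k => cc k • χ k),
      MeasureTheory.ae_all_iff.mpr hcc, MeasureTheory.ae_all_iff.mpr hsm, hR0]
      with x hx1 hx2 hx3 hx4 hx5
    rw [hx1, hx2]
    have hxuniv : x ∈ (⋃ k ∈ Finset.range n₀, D k) ∪ (R n₀).1 := (huniv n₀) ▸ Set.mem_univ x
    rcases hxuniv with hx6 | hx6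
    swap
    · exact absurd hx6 hx5
    simp only [Set.mem_iUnion, Finset.mem_range] at hx6
    obtain ⟨k, hk, hxk⟩ := hx6
    rw [Finset.sum_eq_single k]
    · rw [hx4 k, Set.indicator_of_mem hxk, mul_one]
      exact hx3 k hxk
    · intro j hj hjk
      rw [hx4 j, Set.indicator_of_notMem, mul_zero]
      intro hxj
      rcases lt_or_gt_of_ne hjk with h' | h'
      · exact Set.disjoint_left.mp (hDdisj h') hxj hxk
      · exact Set.disjoint_left.mp (hDdisj h') hxk hxj
    · intro hk'
      exact absurd (Finset.mem_range.mpr hk) hk'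
  refine Module.finite_def.mpr ⟨(Finset.range n₀).image χ, ?_⟩
  rw [Submodule.eq_top_iff']
  intro g
  obtain ⟨cc, rfl⟩ := hspan g
  refine Submodule.sum_mem _ fun k hk => Submodule.smul_mem _ _ (Submodule.subset_span ?_)
  exact Finset.mem_coe.mpr (Finset.mem_image_of_mem χ hk)


end NonSA

open NonSA in
/-- If `L^∞(X, μ)` is infinite dimensional, then it contains a subalgebra
(a submodule closed under a.e.-pointwise multiplication) that is not closed
under complex conjugation. -/
theorem exists_non_selfAdjoint_subalgebra_of_infiniteDimensional_Linfty
    (X : Type*) [MeasurableSpace X] (μ : Measure X)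
    (hfd : ¬ FiniteDimensional ℂ (Lp ℂ ⊤ μ)) :
    ∃ A : Submodule ℂ (Lp ℂ ⊤ μ),
      (∀ f ∈ A, ∀ g ∈ A, ∃ h ∈ A, (h : X → ℂ) =ᵐ[μ] fun x => f x * g x) ∧
      ∃ f ∈ A, ∀ g ∈ A, ¬ ((g : X → ℂ) =ᵐ[μ] fun x => starRingEnd ℂ (f x)) := by
  classical
  have hfam : ∃ E : ℕ → Set X, (∀ n, MeasurableSet (E n)) ∧ (∀ n, 0 < μ (E n)) ∧
      Pairwise (Function.onFun Disjoint E) := by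
    by_contra hno
    exact hfd (finiteDimensional_of_no_family hno)
  obtain ⟨E, hEm, hEpos, hEdisj⟩ := hfam
  -- the values
  set c : ℕ → ℂ := fun n => Complex.exp (n * Complex.I) with hc
  have habs : ∀ n, ‖c n‖ = 1 := by
    intro n; simp [hc, Complex.norm_exp]
  have hinj : Function.Injective c := by
    intro n m hnm
    rw [hc, Complex.exp_eq_exp_iff_exists_int] at hnm
    obtain ⟨k, hk⟩ := hnm
    have him' := congrArg Complex.im hk
    have him : (n : ℝ) = (m : ℝ) + (k : ℝ) * (2 * Real.pi) := by
      simp [Complex.add_im, Complex.mul_im, Complex.mul_re] at him'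
      linarith
    have hk0 : k = 0 := by
      by_contra hk0
      have hk' : (k : ℝ) ≠ 0 := Int.cast_ne_zero.mpr hk0
      have : Real.pi = ((n : ℝ) - m) / (2 * k) := by field_simp; linarith
      exact (irrational_pi.ne_rat (((n : ℚ) - m) / (2 * k))) (by rw [this]; push_cast; ring)
    rw [hk0] at him
    have : (n : ℝ) = (m : ℝ) := by push_cast at him; linarith
    exact_mod_cast this
  -- the function
  set f : X → ℂ := fun x => ∑' n, (E n).indicator (fun _ => c n) x with hf
  have hval : ∀ n x, x ∈ E n → f x = c n := by
    intro n x hx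
    have hfx : f x = ∑' m, (E m).indicator (fun _ => c m) x := rfl
    rw [hfx]
    have : ∀ m, m ≠ n → (E m).indicator (fun _ => c m) x = 0 := by
      intro m hm
      exact Set.indicator_of_notMem (Set.disjoint_right.mp (hEdisj hm) hx) _
    rw [tsum_eq_single n this]
    exact Set.indicator_of_mem hx _
  have hval0 : ∀ x, (∀ n, x ∉ E n) → f x = 0 := by
    intro x hx
    have hfx : f x = ∑' m, (E m).indicator (fun _ => c m) x := rfl
    rw [hfx]
    calc (∑' n, (E n).indicator (fun _ => c n) x) = ∑' (_ : ℕ), (0 : ℂ) :=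
          tsum_congr fun m => Set.indicator_of_notMem (hx m) _
      _ = 0 := tsum_zero
  have hbound : ∀ x, ‖f x‖ ≤ 1 := by
    intro x
    by_cases hx : ∃ n, x ∈ E n
    · obtain ⟨n, hn⟩ := hx
      rw [hval n x hn]
      exact le_of_eq (habs n)
    · push_neg at hx
      rw [hval0 x hx]
      simp
  have hmeas : Measurable f := by
    apply measurable_of_tendsto_metrizable
      (f := fun N x => ∑ n ∈ Finset.range N, (E n).indicator (fun _ => c n) x)
    · exact fun N => Finset.measurable_sum _ fun n _ => measurable_const.indicator (hEm n)
    · rw [tendsto_pi_nhds]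
      intro x
      by_cases hx : ∃ n, x ∈ E n
      · obtain ⟨n, hn⟩ := hx
        rw [hval n x hn]
        refine Filter.Tendsto.congr' ?_ (tendsto_const_nhds (x := c n))
        filter_upwards [Filter.eventually_ge_atTop (n + 1)] with N hN
        refine ((Finset.sum_eq_single n ?_ ?_).trans (Set.indicator_of_mem hn _)).symm
        · intro m _ hm
          exact Set.indicator_of_notMem (Set.disjoint_right.mp (hEdisj hm) hn) _
        · intro hc'; exact absurd (Finset.mem_range.mpr hN) hc'
      · push_neg at hx
        rw [hval0 x hx]
        refine Filter.Tendsto.congr' ?_ (tendsto_const_nhds (x := (0 : ℂ)))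
        filter_upwards with N
        symm
        rw [Finset.sum_congr rfl fun m _ => Set.indicator_of_notMem (hx m) _]
        simp
  -- powers of f in L∞
  have hmem : ∀ m : ℕ, MemLp (f ^ (m + 1)) ⊤ μ := by
    intro m
    refine memLp_top_of_bound ((hmeas.pow_const (m + 1)).aestronglyMeasurable) 1
      (Filter.Eventually.of_forall fun x => ?_)
    rw [Pi.pow_apply, norm_pow]
    exact pow_le_one₀ (norm_nonneg _) (hbound x)
  set F : ℕ → Lp ℂ ⊤ μ := fun m => (hmem m).toLp _ with hF
  have hFcoe : ∀ m, (↑↑(F m) : X → ℂ) =ᵐ[μ] f ^ (m + 1) := fun m => (hmem m).coeFn_toLp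
  set A : Submodule ℂ (Lp ℂ ⊤ μ) := Submodule.span ℂ (Set.range F) with hA
  have hFA : ∀ m, F m ∈ A := fun m => Submodule.subset_span ⟨m, rfl⟩
  refine ⟨A, ?_, ?_⟩
  · -- closed under multiplication
    intro u hu
    induction hu using Submodule.span_induction with
    | mem u hu' =>
      obtain ⟨i, rfl⟩ := hu'
      intro v hv
      induction hv using Submodule.span_induction with
      | mem v hv' =>
        obtain ⟨j, rfl⟩ := hv'
        refine ⟨F (i + j + 1), hFA _, ?_⟩
        filter_upwards [hFcoe i, hFcoe j, hFcoe (i + j + 1)] with x hx1 hx2 hx3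
        rw [hx1, hx2, hx3, Pi.pow_apply, Pi.pow_apply, Pi.pow_apply]
        ring
      | zero =>
        refine ⟨0, A.zero_mem, ?_⟩
        filter_upwards [Lp.coeFn_zero (E := ℂ) (p := ⊤) (μ := μ)] with x hx
        rw [hx]
        simp
      | add v₁ v₂ hv₁ hv₂ ih₁ ih₂ =>
        obtain ⟨h₁, hh₁, he₁⟩ := ih₁
        obtain ⟨h₂, hh₂, he₂⟩ := ih₂
        refine ⟨h₁ + h₂, A.add_mem hh₁ hh₂, ?_⟩
        filter_upwards [Lp.coeFn_add h₁ h₂, Lp.coeFn_add v₁ v₂, he₁, he₂] with x hx1 hx2 hx3 hx4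
        rw [hx1, hx2]
        simp only [Pi.add_apply, hx3, hx4]
        ring
      | smul a v hv ih =>
        obtain ⟨h₁, hh₁, he₁⟩ := ih
        refine ⟨a • h₁, A.smul_mem a hh₁, ?_⟩
        filter_upwards [Lp.coeFn_smul a h₁, Lp.coeFn_smul a v, he₁] with x hx1 hx2 hx3
        rw [hx1, hx2]
        simp only [Pi.smul_apply, smul_eq_mul, hx3]
        ring
    | zero =>
      intro v hv
      refine ⟨0, A.zero_mem, ?_⟩
      filter_upwards [Lp.coeFn_zero (E := ℂ) (p := ⊤) (μ := μ)] with x hx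
      rw [hx]
      simp
    | add u₁ u₂ hu₁ hu₂ ih₁ ih₂ =>
      intro v hv
      obtain ⟨h₁, hh₁, he₁⟩ := ih₁ v hv
      obtain ⟨h₂, hh₂, he₂⟩ := ih₂ v hv
      refine ⟨h₁ + h₂, A.add_mem hh₁ hh₂, ?_⟩
      filter_upwards [Lp.coeFn_add h₁ h₂, Lp.coeFn_add u₁ u₂, he₁, he₂] with x hx1 hx2 hx3 hx4
      rw [hx1, hx2]
      simp only [Pi.add_apply, hx3, hx4]
      ring
    | smul a u hu ih =>
      intro v hv
      obtain ⟨h₁, hh₁, he₁⟩ := ih v hv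
      refine ⟨a • h₁, A.smul_mem a hh₁, ?_⟩
      filter_upwards [Lp.coeFn_smul a h₁, Lp.coeFn_smul a u, he₁] with x hx1 hx2 hx3
      rw [hx1, hx2]
      simp only [Pi.smul_apply, smul_eq_mul, hx3]
      ring
  · -- F 0 has no conjugate in A
    refine ⟨F 0, hFA 0, ?_⟩
    intro g hg hgc
    rw [hA, Finsupp.mem_span_range_iff_exists_finsupp] at hg
    obtain ⟨a, ha⟩ := hg
    -- express g a.e. as a polynomial in f
    have hsum : (↑↑g : X → ℂ) =ᵐ[μ] fun x => ∑ i ∈ a.support, a i * f x ^ (i + 1) := by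
      rw [← ha]
      have h1 := coeFn_finset_sum a.support (fun i => a i • F i)
      have h2 : ∀ i : ℕ, (↑↑(a i • F i) : X → ℂ) =ᵐ[μ] fun x => a i * f x ^ (i + 1) := by
        intro i
        filter_upwards [Lp.coeFn_smul (a i) (F i), hFcoe i] with x hx1 hx2
        rw [hx1, Pi.smul_apply, hx2, Pi.pow_apply, smul_eq_mul]
      rw [Finsupp.sum]
      filter_upwards [h1, MeasureTheory.ae_all_iff.mpr h2] with x hx1 hx2
      rw [hx1]
      exact Finset.sum_congr rfl fun i _ => hx2 i
    have hconj : (fun x => starRingEnd ℂ ((F 0 : X → ℂ) x)) =ᵐ[μ] fun x => starRingEnd ℂ (f x) := by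
      filter_upwards [hFcoe 0] with x hx
      rw [hx, Pi.pow_apply, pow_one]
    have hae : ∀ᵐ x ∂μ, ∑ i ∈ a.support, a i * f x ^ (i + 1) = starRingEnd ℂ (f x) := by
      filter_upwards [hsum, hgc, hconj] with x hx1 hx2 hx3
      rw [← hx1, hx2, hx3]
    -- evaluate on each E n
    have heq : ∀ n, ∑ i ∈ a.support, a i * c n ^ (i + 1) = starRingEnd ℂ (c n) := by
      intro n
      set Φ : X → Prop := fun x => ∑ i ∈ a.support, a i * f x ^ (i + 1) = starRingEnd ℂ (f x)
        with hΦ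
      have hbad : μ {x | ¬ Φ x} = 0 := hae
      have hle : μ (E n) ≤ μ (E n ∩ {x | Φ x}) + μ {x | ¬ Φ x} := by
        refine le_trans (measure_mono ?_) (measure_union_le _ _)
        intro x hx
        by_cases hΦx : Φ x
        · exact Or.inl ⟨hx, hΦx⟩
        · exact Or.inr hΦx
      have hne : μ (E n ∩ {x | Φ x}) ≠ 0 := by
        intro h0
        rw [h0, hbad, add_zero] at hle
        exact absurd (le_antisymm hle (by simp)) (hEpos n).ne'
      obtain ⟨x, hxE, hxΦ⟩ := nonempty_of_measure_ne_zero hne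
      have := hxΦ
      rw [hΦ] at this
      simpa [hval n x hxE] using this
    -- polynomial with infinitely many roots
    set q : Polynomial ℂ :=
      (∑ i ∈ a.support, Polynomial.C (a i) * Polynomial.X ^ (i + 2)) - Polynomial.C 1 with hq
    have hroot : ∀ n, q.IsRoot (c n) := by
      intro n
      rw [Polynomial.IsRoot, hq]
      rw [Polynomial.eval_sub, Polynomial.eval_finset_sum, Polynomial.eval_C]
      have : ∀ i ∈ a.support,
          (Polynomial.C (a i) * Polynomial.X ^ (i + 2)).eval (c n) = c n * (a i * c n ^ (i + 1)) := by
        intro i _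
        rw [Polynomial.eval_mul, Polynomial.eval_C, Polynomial.eval_pow, Polynomial.eval_X]
        ring
      rw [Finset.sum_congr rfl this, ← Finset.mul_sum, heq n, Complex.mul_conj]
      rw [← Complex.sq_norm, habs n]
      norm_num
    have hq0 : q = 0 :=
      Polynomial.eq_zero_of_infinite_isRoot q
        (Set.infinite_of_injective_forall_mem hinj hroot)
    have : q.eval 0 = 0 := by rw [hq0]; simp
    rw [hq, Polynomial.eval_sub, Polynomial.eval_finset_sum, Polynomial.eval_C] at this
    have hz : ∀ i ∈ a.support, (Polynomial.C (a i) * Polynomial.X ^ (i + 2)).eval 0 = 0 := by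
      intro i _
      rw [Polynomial.eval_mul, Polynomial.eval_C, Polynomial.eval_pow, Polynomial.eval_X]
      rw [zero_pow (by omega), mul_zero]
    rw [Finset.sum_congr rfl hz, Finset.sum_const, smul_zero, zero_sub] at this
    exact absurd this (by norm_num)
end

section
/- Let A be a finite dimensional subalgebra of the algebra of all complex-valued functions on a set X, spanned by functions s_1, …, s_n each taking only finitely many values. Then A is spanned by indicator functions of the (finitely many) nonzero level sets of the map s = (s_1, …, s_n) : X → ℂⁿ; in particular A is closed under complex conjugation. -/
/-- If a subalgebra `A` of the complex-valued functions on a set `X` is spanned by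
finitely many functions `s 1, …, s n`, each with finite range, then `A` is spanned
by the indicator functions of the nonzero level sets of `s = (s 1, …, s n)`;
in particular `A` is closed under complex conjugation. -/
theorem span_of_simple_functions_selfAdjoint
    (X : Type*) (n : ℕ) (s : Fin n → X → ℂ)
    (hfin : ∀ j, (Set.range (s j)).Finite)
    (A : Subalgebra ℂ (X → ℂ))
    (hspan : A.toSubmodule = Submodule.span ℂ (Set.range s)) :
    A.toSubmodule = Submodule.span ℂ
      {g : X → ℂ | ∃ v : Fin n → ℂ, v ∈ Set.range (fun x j => s j x) ∧ v ≠ 0 ∧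
        g = Set.indicator ((fun x j => s j x) ⁻¹' {v}) 1} ∧
    ∀ f ∈ A, (fun x => starRingEnd ℂ (f x)) ∈ A := by
  classical
  set S : X → (Fin n → ℂ) := fun x j => s j x with hSdef
  set E : Set (X → ℂ) :=
    {g : X → ℂ | ∃ v : Fin n → ℂ, v ∈ Set.range S ∧ v ≠ 0 ∧
      g = Set.indicator (S ⁻¹' {v}) 1} with hEdef
  have hSfin : (Set.range S).Finite := by
    apply Set.Finite.subset (Set.Finite.pi (fun j => hfin j))
    rintro _ ⟨x, rfl⟩ j _
    exact ⟨x, rfl⟩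
  have smem : ∀ j, s j ∈ A := by
    intro j
    have : s j ∈ A.toSubmodule := by
      rw [hspan]; exact Submodule.subset_span ⟨j, rfl⟩
    exact this
  -- every value of S is nonzero
  have h1 : (1 : X → ℂ) ∈ Submodule.span ℂ (Set.range s) := by
    rw [← hspan]; exact A.one_mem
  obtain ⟨c, hc⟩ := (Submodule.mem_span_range_iff_exists_fun ℂ).mp h1
  have hne : ∀ x, S x ≠ 0 := by
    intro x h0
    have hz : ∀ j, s j x = 0 := fun j => congrFun h0 j
    have := congrFun hc x
    simp [Finset.sum_apply, hz] at this
  -- indicator of each level set is in A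
  have keyA : ∀ v ∈ Set.range S, Set.indicator (S ⁻¹' {v}) (1 : X → ℂ) ∈ A := by
    intro v hv
    have hchoice : ∀ w : Fin n → ℂ, w ≠ v → ∃ j, w j ≠ v j :=
      fun w h => Function.ne_iff.mp h
    have hNE : Nonempty (Fin n) := by
      obtain ⟨x, rfl⟩ := hv
      obtain ⟨j, -⟩ := Function.ne_iff.mp (hne x)
      exact ⟨j⟩
    choose! j hj using hchoice
    set g : (Fin n → ℂ) → (X → ℂ) :=
      fun w => (v (j w) - w (j w))⁻¹ • (s (j w) - fun _ => w (j w)) with hg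
    have hgA : ∀ w, g w ∈ A := by
      intro w
      exact A.smul_mem (A.sub_mem (smem _) (A.algebraMap_mem (w (j w)))) _
    have heq : Set.indicator (S ⁻¹' {v}) (1 : X → ℂ)
        = ∏ w ∈ hSfin.toFinset.erase v, g w := by
      funext x
      rw [Finset.prod_apply]
      by_cases hx : S x = v
      · rw [Set.indicator_of_mem (show x ∈ S ⁻¹' {v} from hx), Pi.one_apply]
        refine (Finset.prod_eq_one ?_).symm
        intro w hw
        have hwv : w ≠ v := (Finset.mem_erase.mp hw).1
        have hsx : s (j w) x = v (j w) := congrFun hx (j w)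
        show (v (j w) - w (j w))⁻¹ * (s (j w) x - w (j w)) = 1
        rw [hsx]
        exact inv_mul_cancel₀ (sub_ne_zero.mpr (Ne.symm (hj w hwv)))
      · rw [Set.indicator_of_notMem (show x ∉ S ⁻¹' {v} from hx)]
        symm
        apply Finset.prod_eq_zero (i := S x)
        · rw [Finset.mem_erase]
          exact ⟨hx, hSfin.mem_toFinset.mpr ⟨x, rfl⟩⟩
        · show (v (j (S x)) - (S x) (j (S x)))⁻¹ * (s (j (S x)) x - (S x) (j (S x))) = 0
          have : s (j (S x)) x = (S x) (j (S x)) := rfl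
          rw [this, sub_self, mul_zero]
    rw [heq]
    exact A.prod_mem fun w _ => hgA w
  -- each s j is a combination of indicators
  have hsum : ∀ jj, s jj
      = ∑ v ∈ hSfin.toFinset, v jj • Set.indicator (S ⁻¹' {v}) (1 : X → ℂ) := by
    intro jj
    funext x
    rw [Finset.sum_apply, Finset.sum_eq_single (S x)]
    · show s jj x = (S x) jj • Set.indicator (S ⁻¹' {S x}) (1 : X → ℂ) x
      rw [Set.indicator_of_mem (by exact rfl)]
      simp [hSdef]
    · intro v hv hvne
      show v jj • Set.indicator (S ⁻¹' {v}) (1 : X → ℂ) x = 0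
      rw [Set.indicator_of_notMem (by simpa using (Ne.symm hvne) : x ∉ S ⁻¹' {v})]
      simp
    · intro h
      exact absurd (hSfin.mem_toFinset.mpr ⟨x, rfl⟩) h
  have main : A.toSubmodule = Submodule.span ℂ E := by
    apply le_antisymm
    · rw [hspan]
      apply Submodule.span_le.mpr
      rintro _ ⟨jj, rfl⟩
      rw [hsum jj]
      apply Submodule.sum_mem
      intro v hv
      apply Submodule.smul_mem
      apply Submodule.subset_span
      refine ⟨v, hSfin.mem_toFinset.mp hv, ?_, rfl⟩
      obtain ⟨x, rfl⟩ := hSfin.mem_toFinset.mp hv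
      exact hne x
    · apply Submodule.span_le.mpr
      rintro _ ⟨v, hv, -, rfl⟩
      exact keyA v hv
  refine ⟨main, ?_⟩
  -- conjugation closure
  intro f hf
  have hf' : f ∈ Submodule.span ℂ E := by rw [← main]; exact hf
  clear hf
  have : (fun x => starRingEnd ℂ (f x)) ∈ Submodule.span ℂ E := by
    induction hf' using Submodule.span_induction with
    | mem g hg =>
      obtain ⟨v, hv, hv0, rfl⟩ := hg
      have : (fun x => starRingEnd ℂ (Set.indicator (S ⁻¹' {v}) (1 : X → ℂ) x))
          = Set.indicator (S ⁻¹' {v}) (1 : X → ℂ) := by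
        funext x
        by_cases hx : x ∈ S ⁻¹' {v}
        · rw [Set.indicator_of_mem hx]; simp
        · rw [Set.indicator_of_notMem (show x ∉ S ⁻¹' {v} from hx)]; simp
      rw [this]
      exact Submodule.subset_span ⟨v, hv, hv0, rfl⟩
    | zero =>
      have : (fun x : X => starRingEnd ℂ ((0 : X → ℂ) x)) = 0 := by funext x; simp
      rw [this]; exact Submodule.zero_mem _
    | add g h hg hh ihg ihh =>
      have : (fun x => starRingEnd ℂ ((g + h) x))
          = (fun x => starRingEnd ℂ (g x)) + (fun x => starRingEnd ℂ (h x)) := by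
        funext x; simp
      rw [this]
      exact Submodule.add_mem _ ihg ihh
    | smul a g hg ihg =>
      have : (fun x => starRingEnd ℂ ((a • g) x))
          = (starRingEnd ℂ a) • (fun x => starRingEnd ℂ (g x)) := by
        funext x; simp
      rw [this]
      exact Submodule.smul_mem _ _ ihg
  rw [← main] at this
  exact this
end

section
/- Let G be a compact group and π an irreducible unitary representation of G on a finite dimensional complex Hilbert space H. If A ⊆ B(H) is a weakly closed abelian subalgebra normalized by π(G) (i.e., π(g) A π(g)⁻¹ = A for all g ∈ G), then A is self-adjoint: T ∈ A implies T* ∈ A. -/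
/-!
Conjugation by `π g` restricts to an automorphism of the commutative algebra `A`. The ranges of
the nilpotent elements of `A` span a `π(G)`-invariant subspace `N • H`, where `N` is the
nilradical; by Nakayama `N • H ≠ H`, so by irreducibility `N • H = 0` and `A` is reduced. Hence
`A ≅ ℂⁿ` is spanned by its minimal idempotents `eᵢ`, which every automorphism permutes. So
`Q = ∑ eᵢ* eᵢ` commutes with `π(G)` and is a scalar `μ` by Schur's lemma. Multiplying by `eⱼ`
gives `eⱼ* eⱼ = μ eⱼ`, and taking adjoints shows that `eⱼ*` is a multiple of `eⱼ`, hence in `A`.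
-/

section MinimalIdempotent

variable (k : Type*) {R : Type*} [Field k] [CommRing R] [Algebra k R]

/-- A nonzero idempotent `e` whose principal ideal `R * e` is the line `k ∙ e`. -/
structure IsMinimalIdempotent (e : R) : Prop where
  isIdempotentElem : IsIdempotentElem e
  ne_zero : e ≠ 0
  exists_mul_eq_smul : ∀ x : R, ∃ c : k, x * e = c • e

variable {k}

namespace IsMinimalIdempotent

theorem mul_eq_zero_or_eq {e f : R} (he : IsIdempotentElem e) (hf : IsMinimalIdempotent k f) :
    e * f = 0 ∨ e * f = f := by
  obtain ⟨c, hc⟩ := hf.exists_mul_eq_smul e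
  have hcc : IsIdempotentElem c := smul_left_injective k hf.ne_zero <| by
    calc (c * c) • f = (c • f) * (c • f) := by
          rw [smul_mul_smul_comm c f c f, hf.isIdempotentElem.eq]
      _ = c • f := by rw [← hc, (he.mul hf.isIdempotentElem).eq]
  rcases IsIdempotentElem.iff_eq_zero_or_one.mp hcc with rfl | rfl
  · exact .inl (by rw [hc, zero_smul])
  · exact .inr (by rw [hc, one_smul])

theorem mul_eq_zero_of_ne {e f : R} (he : IsMinimalIdempotent k e) (hf : IsMinimalIdempotent k f)
    (hne : e ≠ f) : e * f = 0 := by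
  rcases mul_eq_zero_or_eq he.isIdempotentElem hf with hef | hef
  · exact hef
  rcases mul_eq_zero_or_eq hf.isIdempotentElem he with hfe | hfe
  · rw [mul_comm, hfe]
  · exact absurd (hfe.symm.trans ((mul_comm f e).trans hef)) hne

theorem map {R' : Type*} [CommRing R'] [Algebra k R'] {e : R} (he : IsMinimalIdempotent k e)
    (φ : R ≃ₐ[k] R') : IsMinimalIdempotent k (φ e) where
  isIdempotentElem := he.isIdempotentElem.map φ
  ne_zero := by simpa using he.ne_zero
  exists_mul_eq_smul x := by
    obtain ⟨c, hc⟩ := he.exists_mul_eq_smul (φ.symm x)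
    exact ⟨c, by simpa using congrArg φ hc⟩

variable {S : Finset R}

theorem mem_of_sum_eq_one (hS : ∀ e ∈ S, IsMinimalIdempotent k e) (hsum : ∑ e ∈ S, e = 1)
    {f : R} (hf : IsMinimalIdempotent k f) : f ∈ S := by
  by_contra hfS
  refine hf.ne_zero ?_
  rw [← mul_one f, ← hsum, Finset.mul_sum]
  exact Finset.sum_eq_zero fun e he =>
    hf.mul_eq_zero_of_ne (hS e he) (ne_of_mem_of_not_mem he hfS).symm

theorem image_algEquiv_eq [DecidableEq R] (hS : ∀ e ∈ S, IsMinimalIdempotent k e)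
    (hsum : ∑ e ∈ S, e = 1) (φ : R ≃ₐ[k] R) : S.image φ = S := by
  refine Finset.eq_of_subset_of_card_le ?_ (Finset.card_image_of_injective S φ.injective).ge
  simp only [Finset.image_subset_iff]
  exact fun e he => mem_of_sum_eq_one hS hsum ((hS e he).map φ)

theorem sum_comp_algEquiv {M : Type*} [AddCommMonoid M] (hS : ∀ e ∈ S, IsMinimalIdempotent k e)
    (hsum : ∑ e ∈ S, e = 1) (φ : R ≃ₐ[k] R) (F : R → M) :
    ∑ e ∈ S, F (φ e) = ∑ e ∈ S, F e := by
  classical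
  rw [← Finset.sum_image φ.injective.injOn, image_algEquiv_eq hS hsum]

theorem exists_eq_sum_smul (hS : ∀ e ∈ S, IsMinimalIdempotent k e) (hsum : ∑ e ∈ S, e = 1)
    (x : R) : ∃ c : R → k, x = ∑ e ∈ S, c e • e := by
  choose! c hc using fun e (he : e ∈ S) => (hS e he).exists_mul_eq_smul x
  refine ⟨c, ?_⟩
  rw [← mul_one x, ← hsum, Finset.mul_sum]
  exact Finset.sum_congr rfl hc

end IsMinimalIdempotent

theorem Ideal.Quotient.algebraMap_surjective_of_isAlgClosed {k R : Type*} [Field k]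
    [IsAlgClosed k] [CommRing R] [Algebra k R] [Module.Finite k R] (I : Ideal R) [I.IsMaximal] :
    Function.Surjective (algebraMap k (R ⧸ I)) :=
  have : Algebra.IsIntegral k (R ⧸ I) := Algebra.IsIntegral.of_finite k _
  IsAlgClosed.algebraMap_bijective_of_isIntegral.2

theorem exists_finset_isMinimalIdempotent_sum_eq_one (k R : Type*) [Field k] [IsAlgClosed k]
    [CommRing R] [Algebra k R] [FiniteDimensional k R] [IsReduced R] :
    ∃ S : Finset R, (∀ e ∈ S, IsMinimalIdempotent k e) ∧ ∑ e ∈ S, e = 1 := by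
  classical
  have : IsArtinianRing R := isArtinian_of_tower k inferInstance
  have : Fintype (MaximalSpectrum R) := Fintype.ofFinite _
  let φ := IsArtinianRing.equivPi R
  let ε : MaximalSpectrum R → R := fun I => φ.symm (Pi.single I 1)
  have hφε (y : R) (I : MaximalSpectrum R) :
      φ (y * ε I) = Pi.single I (Ideal.Quotient.mk I.asIdeal y) := by
    rw [map_mul, φ.apply_symm_apply, ← Pi.single_mul_right, mul_one]
    rfl
  have hε : Function.Injective ε := fun I J hIJ => by
    by_contra hne
    simpa [ε, Pi.single_apply, hne] using congrFun (φ.symm.injective hIJ) I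
  refine ⟨Finset.univ.image ε, ?_, ?_⟩
  · simp only [Finset.mem_image, Finset.mem_univ, true_and, forall_exists_index,
      forall_apply_eq_imp_iff]
    intro I
    have := I.isMaximal
    refine ⟨(CompleteOrthogonalIdempotents.single _).idem I |>.map φ.symm, by simp [ε],
      fun x => ?_⟩
    obtain ⟨c, hc⟩ := Ideal.Quotient.algebraMap_surjective_of_isAlgClosed (k := k) I.asIdeal
      (Ideal.Quotient.mk I.asIdeal x)
    refine ⟨c, φ.injective ?_⟩
    rw [Algebra.smul_def, hφε, hφε, Ideal.Quotient.mk_algebraMap, hc]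
  · rw [Finset.sum_image hε.injOn, ← map_sum, Finset.univ_sum_single]
    exact map_one φ.symm

end MinimalIdempotent

section Reduced

variable {R M : Type*} [CommRing R] [AddCommGroup M] [Module R M]

theorem isReduced_of_nilradical_smul_top [Module.Finite R M] [FaithfulSMul R M]
    (h : nilradical R • (⊤ : Submodule R M) = ⊥ ∨ nilradical R • (⊤ : Submodule R M) = ⊤) :
    IsReduced R := by
  have hbot : nilradical R • (⊤ : Submodule R M) = ⊥ := by
    refine h.elim id fun htop => ?_
    rw [htop]
    refine Submodule.eq_bot_of_le_smul_of_le_jacobson_bot (nilradical R) ⊤ Module.Finite.fg_top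
      htop.ge ?_
    rw [Ideal.jacobson_bot]
    exact nilradical_le_jacobson R
  refine ⟨fun x hx => FaithfulSMul.eq_of_smul_eq_smul (α := M) fun m => ?_⟩
  have : x • m ∈ nilradical R • (⊤ : Submodule R M) := Submodule.smul_mem_smul hx trivial
  rw [hbot, Submodule.mem_bot] at this
  rw [this, zero_smul]

theorem Submodule.mapsTo_ideal_smul_top {F : Type*} [FunLike F M M] [AddHomClass F M M]
    {I : Ideal R} {σ : R → R} (hσ : ∀ r ∈ I, σ r ∈ I) (f : F)
    (hf : ∀ (r : R) (m : M), f (r • m) = σ r • f m) :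
    Set.MapsTo f (I • ⊤ : Submodule R M) (I • ⊤ : Submodule R M) := fun m hm => by
  refine Submodule.smul_induction_on (p := fun m => f m ∈ I • (⊤ : Submodule R M)) hm
    (fun r hr n _ => ?_) fun x y hx hy => ?_
  · rw [hf]
    exact Submodule.smul_mem_smul (hσ r hr) trivial
  · rw [map_add]
    exact add_mem hx hy

theorem isReduced_of_forall_invariant_eq_bot_or_eq_top {ι F : Type*} [Module.Finite R M]
    [FaithfulSMul R M] [FunLike F M M] [AddHomClass F M M] (σ : ι → R →+* R) (f : ι → F)
    (hf : ∀ i (r : R) (m : M), f i (r • m) = σ i r • f i m)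
    (hirr : ∀ U : Submodule R M, (∀ i, ∀ m ∈ U, f i m ∈ U) → U = ⊥ ∨ U = ⊤) :
    IsReduced R :=
  isReduced_of_nilradical_smul_top <| hirr _ fun i _ hm =>
    Submodule.mapsTo_ideal_smul_top (fun _ hr => IsNilpotent.map hr (σ i)) (f i) (hf i) hm

end Reduced

theorem Module.End.exists_eq_smul_of_commute {ι k V : Type*} [Field k] [IsAlgClosed k]
    [AddCommGroup V] [Module k V] [FiniteDimensional k V] [Nontrivial V] (ρ : ι → Module.End k V)
    (hirr : ∀ U : Submodule k V, (∀ i, ∀ v ∈ U, ρ i v ∈ U) → U = ⊥ ∨ U = ⊤) (Q : Module.End k V)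
    (hQ : ∀ i, Commute (ρ i) Q) : ∃ μ : k, ∀ v, Q v = μ • v := by
  obtain ⟨μ, hμ⟩ := Q.exists_eigenvalue
  have htop : Q.eigenspace μ = ⊤ :=
    (hirr _ fun i => Module.End.mapsTo_genEigenspace_of_comm (hQ i).symm μ 1).resolve_left hμ
  exact ⟨μ, fun v => Module.End.mem_eigenspace_iff.mp (htop ▸ Submodule.mem_top)⟩

theorem exists_star_eq_smul_of_star_mul_self_eq_smul {B : Type*} [CStarAlgebra B] {x : B} {μ : ℂ}
    (h : star x * x = μ • x) : ∃ c : ℂ, star x = c • x := by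
  rcases eq_or_ne μ 0 with rfl | hμ
  · rw [zero_smul, CStarRing.star_mul_self_eq_zero_iff] at h
    exact ⟨0, by rw [h, star_zero, zero_smul]⟩
  · have h' : (starRingEnd ℂ μ) • star x = μ • x :=
      calc (starRingEnd ℂ μ) • star x = star (μ • x) := by rw [star_smul, Complex.star_def]
        _ = μ • x := by rw [← h, star_mul, star_star]
    refine ⟨(starRingEnd ℂ μ)⁻¹ * μ, ?_⟩
    rw [mul_smul, ← h', smul_smul, inv_mul_cancel₀ (by simpa using hμ), one_smul]

theorem sum_star_mul_self_mul_eq {ι B : Type*} [Semiring B] [Star B] (S : Finset ι) (E : ι → B)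
    (hidem : ∀ i ∈ S, IsIdempotentElem (E i)) (horth : ∀ i ∈ S, ∀ j ∈ S, i ≠ j → E j * E i = 0)
    {i : ι} (hi : i ∈ S) : (∑ j ∈ S, star (E j) * E j) * E i = star (E i) * E i := by
  rw [Finset.sum_mul, Finset.sum_eq_single i]
  · rw [mul_assoc, (hidem i hi).eq]
  · intro j hj hji
    rw [mul_assoc, horth i hi j hj hji.symm, mul_zero]
  · exact fun h => absurd hi h

theorem exists_star_eq_smul_of_commute_sum_star_mul_self {ι κ H : Type*} [NormedAddCommGroup H]
    [InnerProductSpace ℂ H] [FiniteDimensional ℂ H] [Nontrivial H] (ρ : ι → H →L[ℂ] H)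
    (hirr : ∀ U : Submodule ℂ H, (∀ i, ∀ v ∈ U, ρ i v ∈ U) → U = ⊥ ∨ U = ⊤)
    (S : Finset κ) (E : κ → H →L[ℂ] H) (hidem : ∀ i ∈ S, IsIdempotentElem (E i))
    (horth : ∀ i ∈ S, ∀ j ∈ S, i ≠ j → E j * E i = 0)
    (hcomm : ∀ i, Commute (ρ i) (∑ j ∈ S, star (E j) * E j)) {j : κ} (hj : j ∈ S) :
    ∃ c : ℂ, star (E j) = c • E j := by
  obtain ⟨μ, hμ⟩ := Module.End.exists_eq_smul_of_commute (fun i => (ρ i : H →ₗ[ℂ] H)) hirr _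
    fun i => (hcomm i).map ContinuousLinearMap.toLinearMapRingHom
  refine exists_star_eq_smul_of_star_mul_self_eq_smul (μ := μ) ?_
  rw [← sum_star_mul_self_mul_eq S E hidem horth hj]
  ext v
  exact hμ _

section Unitary

variable {S B : Type*} [CommSemiring S] [Semiring B] [StarMul B] [Algebra S B]

open Unitary

theorem Unitary.commute_of_conjStarAlgAut_apply_eq {u : unitary B} {x : B}
    (h : conjStarAlgAut S B u x = x) : Commute (u : B) x :=
  calc (u : B) * x = u * x * (star (u : B) * u) := by rw [coe_star_mul_self, mul_one]
    _ = conjStarAlgAut S B u x * u := by rw [conjStarAlgAut_apply, mul_assoc, mul_assoc, mul_assoc]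
    _ = x * u := by rw [h]

theorem Subalgebra.map_conjStarAlgAut_eq (A : Subalgebra S B) {u : unitary B}
    (h : (fun T : B => (u : B) * T * (u⁻¹ : unitary B)) '' A = A) :
    A.map ((conjStarAlgAut S B u).toAlgEquiv : B →ₐ[S] B) = A := by
  refine SetLike.coe_injective ?_
  rw [Subalgebra.coe_map]
  convert h using 2 with T
  simp [← star_eq_inv]

end Unitary

noncomputable def Subalgebra.equivOfMapEq {R B : Type*} [CommSemiring R] [Semiring B] [Algebra R B]
    (A : Subalgebra R B) (e : B ≃ₐ[R] B) (h : A.map (e : B →ₐ[R] B) = A) : A ≃ₐ[R] A :=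
  (e.subalgebraMap A).trans (Subalgebra.equivOfEq _ _ h)

abbrev Subalgebra.commRingOfComm {R B : Type*} [CommRing R] [Ring B] [Algebra R B]
    (A : Subalgebra R B) (h : ∀ S ∈ A, ∀ T ∈ A, S * T = T * S) : CommRing A :=
  { A.toRing with mul_comm := fun S T => Subtype.ext (h _ S.2 _ T.2) }

section Irreducible

variable {ι H : Type*} [NormedAddCommGroup H] [InnerProductSpace ℂ H] [FiniteDimensional ℂ H]

open Unitary

theorem Subalgebra.isReduced_of_irreducible (u : ι → unitary (H →L[ℂ] H))
    (hirr : ∀ U : Submodule ℂ H, (∀ i, ∀ v ∈ U, (u i : H →L[ℂ] H) v ∈ U) → U = ⊥ ∨ U = ⊤)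
    (A : Subalgebra ℂ (H →L[ℂ] H)) (habelian : ∀ S ∈ A, ∀ T ∈ A, S * T = T * S)
    (hmap : ∀ i, A.map ((conjStarAlgAut ℂ _ (u i)).toAlgEquiv : (H →L[ℂ] H) →ₐ[ℂ] _) = A) :
    IsReduced A := by
  let _ := A.commRingOfComm habelian
  have : IsScalarTower ℂ (H →L[ℂ] H) H := ⟨fun _ _ _ => rfl⟩
  have : Module.Finite A H := Module.Finite.of_restrictScalars_finite ℂ A H
  refine isReduced_of_forall_invariant_eq_bot_or_eq_top
    (fun i => (A.equivOfMapEq _ (hmap i) : A →+* A)) (fun i => (u i : H →L[ℂ] H))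
    (fun i r v => ?_) fun U hU => ?_
  · change _ = conjStarAlgAut ℂ _ (u i) r ((u i : H →L[ℂ] H) v)
    rw [conjStarAlgAut_apply, mul_apply_eq_comp, mul_apply_eq_comp, ← mul_apply_eq_comp (star _),
      coe_star_mul_self, one_apply_eq_self]
    rfl
  · simpa only [Submodule.restrictScalars_eq_bot_iff, Submodule.restrictScalars_eq_top_iff]
      using hirr (U.restrictScalars ℂ) hU

theorem star_mem_range_of_isReduced [Nontrivial H] (u : ι → unitary (H →L[ℂ] H))
    (hirr : ∀ U : Submodule ℂ H, (∀ i, ∀ v ∈ U, (u i : H →L[ℂ] H) v ∈ U) → U = ⊥ ∨ U = ⊤)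
    {R : Type*} [CommRing R] [Algebra ℂ R] [FiniteDimensional ℂ R] [IsReduced R]
    (j : R →ₐ[ℂ] H →L[ℂ] H) (α : ι → R ≃ₐ[ℂ] R)
    (hα : ∀ i x, j (α i x) = conjStarAlgAut ℂ _ (u i) (j x)) (x : R) :
    star (j x) ∈ j.range := by
  obtain ⟨S, hS, hsum⟩ := exists_finset_isMinimalIdempotent_sum_eq_one ℂ R
  have hstar (e : R) (he : e ∈ S) : ∃ c : ℂ, star (j e) = c • j e :=
    exists_star_eq_smul_of_commute_sum_star_mul_self (fun i => (u i : H →L[ℂ] H)) hirr S j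
      (fun e he => (hS e he).isIdempotentElem.map j)
      (fun e he f hf hne => by
        rw [← map_mul, (hS f hf).mul_eq_zero_of_ne (hS e he) hne.symm, map_zero])
      (fun i => commute_of_conjStarAlgAut_apply_eq (S := ℂ) (by
        simp only [map_sum, map_mul, map_star, ← hα]
        exact IsMinimalIdempotent.sum_comp_algEquiv hS hsum (α i) fun e => star (j e) * j e))
      he
  obtain ⟨c, rfl⟩ := IsMinimalIdempotent.exists_eq_sum_smul hS hsum x
  rw [map_sum, star_sum]
  refine Subalgebra.sum_mem _ fun e he => ?_
  obtain ⟨d, hd⟩ := hstar e he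
  rw [map_smul, star_smul, hd]
  exact Subalgebra.smul_mem _ (Subalgebra.smul_mem _ (AlgHom.mem_range_self j e) _) _

end Irreducible

theorem inductive_algebra_selfAdjoint_of_compact_general
    (G : Type*) [Group G]
    (H : Type*) [NormedAddCommGroup H] [InnerProductSpace ℂ H] [FiniteDimensional ℂ H]
    (π : G →* unitary (H →L[ℂ] H))
    (hirr : ∀ U : Submodule ℂ H, (∀ g : G, ∀ v ∈ U, (π g : H →L[ℂ] H) v ∈ U) →
      U = ⊥ ∨ U = ⊤)
    (A : Subalgebra ℂ (H →L[ℂ] H))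
    (habelian : ∀ S ∈ A, ∀ T ∈ A, S * T = T * S)
    (hnorm : ∀ g : G,
      (fun T : H →L[ℂ] H => (π g : H →L[ℂ] H) * T * ((π g)⁻¹ : unitary (H →L[ℂ] H))) '' A = A) :
    ∀ T ∈ A, star T ∈ A := by
  rcases subsingleton_or_nontrivial H with hH | hH
  · exact fun T hT => by rwa [Subsingleton.elim (star T) T]
  have hmap (g : G) := A.map_conjStarAlgAut_eq (hnorm g)
  let _ := A.commRingOfComm habelian
  have : IsReduced A := A.isReduced_of_irreducible (fun g => π g) hirr habelian hmap
  intro T hT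
  simpa using star_mem_range_of_isReduced (fun g => π g) hirr A.val
    (fun g => A.equivOfMapEq _ (hmap g)) (fun _ _ => rfl) ⟨T, hT⟩

/-- Inductive algebras for a compact group are self-adjoint: if `π` is a continuous
irreducible unitary representation of a compact group `G` on a finite dimensional
complex Hilbert space `H`, and `A` is a weakly closed (equivalently, in finite
dimensions, closed) abelian subalgebra of `B(H)` normalized by `π(G)`, then `A` is
closed under adjoints. -/
theorem inductive_algebra_selfAdjoint_of_compact
    (G : Type*) [Group G] [TopologicalSpace G] [IsTopologicalGroup G] [CompactSpace G]
    (H : Type*) [NormedAddCommGroup H] [InnerProductSpace ℂ H] [FiniteDimensional ℂ H]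
    (π : G →* unitary (H →L[ℂ] H))
    (hcont : Continuous fun g : G => (π g : H →L[ℂ] H))
    (hirr : ∀ U : Submodule ℂ H, (∀ g : G, ∀ v ∈ U, (π g : H →L[ℂ] H) v ∈ U) →
      U = ⊥ ∨ U = ⊤)
    (A : Subalgebra ℂ (H →L[ℂ] H))
    (hclosed : IsClosed (A : Set (H →L[ℂ] H)))
    (habelian : ∀ S ∈ A, ∀ T ∈ A, S * T = T * S)
    (hnorm : ∀ g : G,
      (fun T : H →L[ℂ] H => (π g : H →L[ℂ] H) * T * ((π g)⁻¹ : unitary (H →L[ℂ] H))) '' A = A) :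
    ∀ T ∈ A, star T ∈ A :=
  inductive_algebra_selfAdjoint_of_compact_general G H π hirr A habelian hnorm
end

section
/- Let G be a group, π an irreducible representation of G on a finite dimensional complex vector space H, and A ⊆ End(H) an abelian subalgebra normalized by π(G). Then the set N of nilpotent elements of A is zero. -/
/-- If `π` is an irreducible representation of a group `G` on a finite dimensional
complex vector space `H`, and `A ⊆ End(H)` is an abelian subalgebra normalized by
`π(G)`, then the nilradical of `A` is zero: every nilpotent element of `A` is `0`. -/
theorem nilradical_of_inductive_algebra_eq_zero
    (G : Type*) [Group G]
    (H : Type*) [AddCommGroup H] [Module ℂ H] [FiniteDimensional ℂ H]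
    (π : Representation ℂ G H)
    (hirr : ∀ U : Submodule ℂ H, (∀ g : G, ∀ v ∈ U, π g v ∈ U) → U = ⊥ ∨ U = ⊤)
    (A : Subalgebra ℂ (Module.End ℂ H))
    (habelian : ∀ S ∈ A, ∀ T ∈ A, S * T = T * S)
    (hnorm : ∀ g : G, (fun T : Module.End ℂ H => π g * T * π g⁻¹) '' A = A) :
    ∀ T ∈ A, IsNilpotent T → T = 0 := by
  intro T hTA hTnil
  classical
  -- Trivial case: H is a zero module
  by_cases hH : ∀ x : H, x = 0
  · ext x; rw [hH (T x), hH x, map_zero]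
  push_neg at hH
  obtain ⟨x₀, hx₀⟩ := hH
  -- The joint kernel of all nilpotent elements of A
  let K : Submodule ℂ H :=
    { carrier := {x | ∀ S ∈ A, IsNilpotent S → S x = 0}
      add_mem' := fun hx hy S hS hn => by
        rw [map_add, hx S hS hn, hy S hS hn, add_zero]
      zero_mem' := fun S hS hn => map_zero S
      smul_mem' := fun c x hx S hS hn => by
        rw [map_smul, hx S hS hn, smul_zero] }
  -- K is nonzero (Engel-type argument): take a minimal nonzero submodule
  -- invariant under all nilpotent elements of A.
  have hKne : K ≠ ⊥ := by
    set 𝒮 : Set (Submodule ℂ H) :=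
      {W | W ≠ ⊥ ∧ ∀ S ∈ A, IsNilpotent S → ∀ x ∈ W, S x ∈ W} with h𝒮
    have htop : (⊤ : Submodule ℂ H) ∈ 𝒮 := by
      refine ⟨fun h => hx₀ ?_, fun _ _ _ _ _ => trivial⟩
      exact (Submodule.eq_bot_iff ⊤).mp h x₀ trivial
    obtain ⟨W, hW, hmin⟩ :=
      (IsWellFounded.wf (r := ((· < ·) : Submodule ℂ H → Submodule ℂ H → Prop))).has_min
        𝒮 ⟨⊤, htop⟩
    obtain ⟨hWne, hWinv⟩ := hW
    -- every nilpotent element of A kills W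
    have hkill : ∀ S ∈ A, IsNilpotent S → ∀ x ∈ W, S x = 0 := by
      intro S hSA hSnil
      have hWK : W ⊓ LinearMap.ker S ∈ 𝒮 := by
        constructor
        · -- the intersection is nonzero
          obtain ⟨x, hxW, hxne⟩ := Submodule.exists_mem_ne_zero_of_ne_bot hWne
          obtain ⟨n, hn⟩ := hSnil
          have hpowW : ∀ m : ℕ, (S ^ m) x ∈ W := by
            intro m
            induction m with
            | zero => simpa using hxW
            | succ m ih => rw [pow_succ', Module.End.mul_apply]; exact hWinv S hSA ⟨n, hn⟩ _ ih
          have hex : ∃ m, (S ^ m) x = 0 := ⟨n, by rw [hn]; rfl⟩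
          set k := Nat.find hex with hk
          have hk0 : k ≠ 0 := by
            intro h
            have := Nat.find_spec hex
            rw [← hk, h, pow_zero] at this
            exact hxne this
          have hklt : (S ^ (k - 1)) x ≠ 0 := Nat.find_min hex (Nat.sub_lt (Nat.pos_of_ne_zero hk0) one_pos)
          refine fun h => hklt ?_
          have hmem : (S ^ (k - 1)) x ∈ W ⊓ LinearMap.ker S := by
            refine ⟨hpowW _, ?_⟩
            have heq1 : S ((S ^ (k - 1)) x) = (S ^ k) x := by
              rw [← Module.End.mul_apply, ← pow_succ',
                Nat.sub_add_cancel (Nat.one_le_iff_ne_zero.mpr hk0)]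
            rw [SetLike.mem_coe, LinearMap.mem_ker, heq1]
            exact Nat.find_spec hex
          rw [h] at hmem
          exact (Submodule.mem_bot ℂ).mp hmem
        · -- the intersection is invariant
          intro S' hS'A hS'nil x hx
          obtain ⟨hxW, hxker⟩ := hx
          refine ⟨hWinv S' hS'A hS'nil x hxW, ?_⟩
          have hc : S (S' x) = S' (S x) := by
            rw [← Module.End.mul_apply, ← Module.End.mul_apply, habelian S hSA S' hS'A]
          rw [SetLike.mem_coe, LinearMap.mem_ker, hc, LinearMap.mem_ker.mp hxker, map_zero]
      have hle : W ⊓ LinearMap.ker S ≤ W := inf_le_left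
      have heq : W ⊓ LinearMap.ker S = W := by
        by_contra h
        exact hmin _ hWK (lt_of_le_of_ne hle h)
      intro x hxW
      have : x ∈ W ⊓ LinearMap.ker S := by rw [heq]; exact hxW
      exact LinearMap.mem_ker.mp this.2
    obtain ⟨x, hxW, hxne⟩ := Submodule.exists_mem_ne_zero_of_ne_bot hWne
    intro hKbot
    refine hxne ((Submodule.eq_bot_iff K).mp hKbot x ?_)
    exact fun S hS hn => hkill S hS hn x hxW
  -- K is invariant under π, hence K = ⊤ by irreducibility
  have hKinv : ∀ g : G, ∀ v ∈ K, π g v ∈ K := by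
    intro g v hv S hSA hSnil
    -- conjugate S by π g⁻¹
    have hS'A : π g⁻¹ * S * π g ∈ A := by
      have := hnorm g⁻¹
      rw [inv_inv] at this
      have hmem : π g⁻¹ * S * π g ∈ (A : Set (Module.End ℂ H)) := by
        rw [← this]; exact ⟨S, hSA, rfl⟩
      exact hmem
    have h1 : π g⁻¹ * π g = 1 := by rw [← map_mul, inv_mul_cancel, map_one]
    have h2 : π g * π g⁻¹ = 1 := by rw [← map_mul, mul_inv_cancel, map_one]
    have hS'nil : IsNilpotent (π g⁻¹ * S * π g) := by
      obtain ⟨n, hn⟩ := hSnil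
      refine ⟨n + 1, ?_⟩
      have hpow : ∀ m : ℕ, (π g⁻¹ * S * π g) ^ (m + 1) = π g⁻¹ * S ^ (m + 1) * π g := by
        intro m
        induction m with
        | zero => simp
        | succ m ih =>
          rw [pow_succ, ih, pow_succ]
          calc π g⁻¹ * S ^ (m + 1) * π g * (π g⁻¹ * S * π g)
              = π g⁻¹ * S ^ (m + 1) * (π g * π g⁻¹) * S * π g := by
                simp only [mul_assoc]
            _ = π g⁻¹ * (S ^ (m + 1) * S) * π g := by rw [h2]; simp only [mul_assoc, one_mul]
      rw [hpow, pow_succ, hn, zero_mul, mul_zero, zero_mul]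
    have key : S (π g v) = π g ((π g⁻¹ * S * π g) v) := by
      simp only [Module.End.mul_apply, ← Module.End.mul_apply (π g) (π g⁻¹),
        h2]
      rfl
    rw [key, hv _ hS'A hS'nil, map_zero]
  rcases hirr K hKinv with h | h
  · exact absurd h hKne
  · ext x
    have hxK : x ∈ K := h ▸ Submodule.mem_top
    exact hxK T hTA hTnil
end

section
/- Let A be a commutative subalgebra of End(H) for a finite dimensional complex vector space H, with no nonzero nilpotent elements. Then H decomposes as the direct sum of the joint eigenspaces H_λ = {v ∈ H : Tv = λ(T)v for all T ∈ A}, over the finitely many linear functionals λ on A with H_λ ≠ 0. -/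
set_option synthInstance.maxHeartbeats 1000000

set_option maxHeartbeats 1000000 in
/-- If `A` is a commutative subalgebra of `End(H)` (`H` finite dimensional over `ℂ`)
with no nonzero nilpotent elements, then `H` is the direct sum of the joint
eigenspaces `H_λ = {v | T v = λ(T) v for all T ∈ A}` over the finitely many linear
functionals `λ` on `A` with `H_λ ≠ 0`. -/
theorem jointEigenspace_directSum_of_reduced_commutative
    (H : Type*) [AddCommGroup H] [Module ℂ H] [FiniteDimensional ℂ H]
    (A : Subalgebra ℂ (Module.End ℂ H))
    (habelian : ∀ S ∈ A, ∀ T ∈ A, S * T = T * S)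
    (hred : ∀ T ∈ A, IsNilpotent T → T = 0) :
    let E : (A →ₗ[ℂ] ℂ) → Submodule ℂ H :=
      fun l => ⨅ T : A, Module.End.eigenspace (T : Module.End ℂ H) (l T)
    {l | E l ≠ ⊥}.Finite ∧
    iSupIndep (fun l : {l : A →ₗ[ℂ] ℂ // E l ≠ ⊥} => E l.1) ∧
    (⨆ l ∈ {l : A →ₗ[ℂ] ℂ | E l ≠ ⊥}, E l) = ⊤ := by
  intro E
  -- every element of A is (finitely) semisimple
  have hss : ∀ T : A, Module.End.IsFinitelySemisimple (T : Module.End ℂ H) := by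
    intro T
    obtain ⟨n, hn, s, _, hnil, hsemi, hfs⟩ :=
      Module.End.exists_isNilpotent_isSemisimple (f := (T : Module.End ℂ H))
    have hnA : n ∈ A := Algebra.adjoin_le (by simpa using T.2) hn
    have hn0 : n = 0 := hred n hnA hnil
    rw [hn0, zero_add] at hfs
    rw [hfs]
    exact hsemi.isFinitelySemisimple
  have hEig : ∀ (T : A) (μ : ℂ),
      Module.End.maxGenEigenspace (T : Module.End ℂ H) μ
        = Module.End.eigenspace (T : Module.End ℂ H) μ :=
    fun T μ => (hss T).maxGenEigenspace_eq_eigenspace μ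
  have hcomm : ∀ S T : A, Commute (S : Module.End ℂ H) (T : Module.End ℂ H) :=
    fun S T => habelian S S.2 T T.2
  -- independence over all functions χ : A → ℂ
  have hindep : iSupIndep fun χ : A → ℂ =>
      ⨅ T : A, Module.End.eigenspace (T : Module.End ℂ H) (χ T) := by
    have := Module.End.independent_iInf_maxGenEigenspace_of_forall_mapsTo
      (fun T : A => (T : Module.End ℂ H))
      (fun S T φ => Module.End.mapsTo_maxGenEigenspace_of_comm (hcomm T S) φ)
    simpa only [hEig] using this
  -- spanning over all functions χ : A → ℂ
  have htop : (⨆ χ : A → ℂ,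
      ⨅ T : A, Module.End.eigenspace (T : Module.End ℂ H) (χ T)) = ⊤ := by
    have := Module.End.iSup_iInf_maxGenEigenspace_eq_top_of_iSup_maxGenEigenspace_eq_top_of_commute
      (fun T : A => (T : Module.End ℂ H)) (fun S T _ => hcomm S T)
      (fun T => Module.End.iSup_maxGenEigenspace_eq_top _)
    simpa only [hEig] using this
  -- if the joint eigenspace of χ is nonzero, χ is linear
  have hlin : ∀ χ : A → ℂ,
      (⨅ T : A, Module.End.eigenspace (T : Module.End ℂ H) (χ T)) ≠ ⊥ →
      ∃ l : A →ₗ[ℂ] ℂ, ∀ T, l T = χ T := by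
    intro χ hχ
    obtain ⟨v, hv, hv0⟩ := Submodule.exists_mem_ne_zero_of_ne_bot hχ
    have hvT : ∀ T : A, (T : Module.End ℂ H) v = χ T • v := by
      intro T
      exact Module.End.mem_eigenspace_iff.mp (Submodule.mem_iInf _ |>.mp hv T)
    have hinj := smul_left_injective ℂ (M := H) hv0
    refine ⟨{ toFun := χ
              map_add' := ?_
              map_smul' := ?_ }, fun T => rfl⟩
    · intro S T
      apply hinj
      show χ (S + T) • v = (χ S + χ T) • v
      rw [← hvT (S + T)]
      simp [add_smul, hvT S, hvT T]
    · intro c T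
      apply hinj
      show χ (c • T) • v = (RingHom.id ℂ c • χ T) • v
      rw [← hvT (c • T)]
      simp [smul_smul, hvT T]
  -- independence over all linear functionals
  have hindepL : iSupIndep fun l : A →ₗ[ℂ] ℂ => E l := by
    have : Function.Injective (fun l : A →ₗ[ℂ] ℂ => (l : A → ℂ)) := DFunLike.coe_injective
    exact hindep.comp this
  refine ⟨?_, ?_, ?_⟩
  · exact WellFoundedGT.finite_ne_bot_of_iSupIndep hindepL
  · exact hindepL.comp Subtype.val_injective
  · rw [eq_top_iff, ← htop]
    refine iSup_le fun χ => ?_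
    by_cases h : (⨅ T : A, Module.End.eigenspace (T : Module.End ℂ H) (χ T)) = ⊥
    · rw [h]; exact bot_le
    · obtain ⟨l, hl⟩ := hlin χ h
      have hEl : E l = ⨅ T : A, Module.End.eigenspace (T : Module.End ℂ H) (χ T) := by
        simp only [E, hl]
      rw [← hEl]
      exact le_biSup E (by rw [Set.mem_setOf_eq, hEl]; exact h)
end

section
/- Let G be a compact group, π an irreducible unitary representation on a finite dimensional Hilbert space H, and A an abelian subalgebra of End(H) normalized by π(G) with trivial nilradical. Then the distinct joint eigenspaces H_λ, λ ∈ Λ, of A are pairwise orthogonal with respect to the inner product of H. -/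
/-!
A positive operator `P` for which the generalized eigenspaces of a single `T₀ ∈ A` are mutually
`P`-orthogonal is easy to build; choosing `T₀` to separate the finitely many joint eigenvalues
`Λ`, distinct joint eigenspaces `H_λ` become `P`-orthogonal. Since `π(g)` normalizes `A`, it maps
joint eigenspaces to joint eigenspaces and permutes `Λ` injectively, so this `P`-orthogonality
survives Haar averaging of `π(g) P π(g)⋆`. The average commutes with `π`, hence is a nonzero
scalar by Schur's lemma, and `P`-orthogonality becomes orthogonality.
-/

open scoped InnerProductSpace

open MeasureTheory Module

theorem Module.Dual.exists_injOn_apply {K M : Type*} [Field K] [Infinite K] [AddCommGroup M]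
    [Module K M] {s : Set (Dual K M)} (hs : s.Finite) : ∃ x : M, s.InjOn fun f ↦ f x := by
  have : Finite s := hs
  obtain ⟨x, hx⟩ := Dual.exists_forall_ne_zero_of_forall_exists
    (fun p : {p : s × s // p.1 ≠ p.2} ↦ (p.1.1 - p.1.2 : Dual K M)) fun p ↦ by
      by_contra! h
      exact p.2 (Subtype.ext (sub_eq_zero.mp (LinearMap.ext h)))
  refine ⟨x, fun f hf g hg hfg ↦ ?_⟩
  by_contra hne
  exact hx ⟨(⟨f, hf⟩, ⟨g, hg⟩), fun h ↦ hne (congrArg Subtype.val h)⟩ (sub_eq_zero.mpr hfg)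

theorem DirectSum.IsInternal.exists_inner_eq_zero_and_re_inner_self_pos {𝕜 H ι : Type*} [RCLike 𝕜]
    [NormedAddCommGroup H] [InnerProductSpace 𝕜 H] [FiniteDimensional 𝕜 H] [DecidableEq ι]
    {ℳ : ι → Submodule 𝕜 H} (h : DirectSum.IsInternal ℳ) :
    ∃ P : H →L[𝕜] H, (∀ i j, i ≠ j → ∀ a ∈ ℳ i, ∀ b ∈ ℳ j, ⟪a, P b⟫_𝕜 = 0) ∧
      ∀ x, x ≠ 0 → 0 < RCLike.re ⟪x, P x⟫_𝕜 := by
  let b := h.collectedBasis fun i ↦ finBasis 𝕜 (ℳ i)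
  have := Module.Finite.finite_basis b
  have := Fintype.ofFinite (Σ i, Fin (finrank 𝕜 (ℳ i)))
  let E : H →ₗ[𝕜] EuclideanSpace 𝕜 _ :=
    (EuclideanSpace.equiv _ 𝕜).symm.toLinearMap ∘ₗ b.equivFun.toLinearMap
  have hE : ∀ x y, ⟪x, (E.adjoint ∘ₗ E) y⟫_𝕜 = ⟪E x, E y⟫_𝕜 := fun x y ↦
    (E.adjoint_inner_right x (E y))
  refine ⟨(E.adjoint ∘ₗ E).toContinuousLinearMap, fun i j hij a ha c hc ↦ ?_, fun x hx ↦ ?_⟩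
  · rw [LinearMap.coe_toContinuousLinearMap', hE, PiLp.inner_apply]
    refine Finset.sum_eq_zero fun ⟨l, t⟩ _ ↦ ?_
    have hEa : E a ⟨l, t⟩ = b.repr a ⟨l, t⟩ := rfl
    have hEc : E c ⟨l, t⟩ = b.repr c ⟨l, t⟩ := rfl
    rcases eq_or_ne i l with rfl | hil
    · have : b.repr c ⟨i, t⟩ = 0 := h.collectedBasis_repr_of_mem_ne _ hij.symm hc
      simp [hEc, this]
    · have : b.repr a ⟨l, t⟩ = 0 := h.collectedBasis_repr_of_mem_ne _ hil ha
      simp [hEa, this]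
  · have : E x ≠ 0 := by simpa [E] using hx
    rw [LinearMap.coe_toContinuousLinearMap', hE, inner_self_eq_norm_sq]
    positivity

theorem Module.End.exists_eq_smul_one_of_forall_commute {K V ι : Type*} [Field K] [IsAlgClosed K]
    [AddCommGroup V] [Module K V] [FiniteDimensional K V] [Nontrivial V] (U : ι → End K V)
    (hirr : ∀ W : Submodule K V, (∀ i, ∀ v ∈ W, U i v ∈ W) → W = ⊥ ∨ W = ⊤)
    {S : End K V} (hS : ∀ i, Commute (U i) S) : ∃ c : K, S = c • 1 := by
  obtain ⟨c, hc⟩ := S.exists_eigenvalue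
  have hinv : ∀ i, ∀ v ∈ S.eigenspace c, U i v ∈ S.eigenspace c := fun i v hv ↦
    S.mapsTo_genEigenspace_of_comm (hS i).symm c 1 hv
  refine ⟨c, ?_⟩
  rcases hirr _ hinv with h | h
  · exact absurd h hc
  · ext v
    simpa using mem_eigenspace_iff.mp (h ▸ Submodule.mem_top : v ∈ S.eigenspace c)

section JointEigenspace

variable {H : Type*} [NormedAddCommGroup H] [NormedSpace ℂ H] (A : Subalgebra ℂ (H →L[ℂ] H))

def jointEigenspace (l : A →ₗ[ℂ] ℂ) : Submodule ℂ H :=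
  ⨅ T : A, End.eigenspace ((T : H →L[ℂ] H) : End ℂ H) (l T)

variable {A}

theorem mem_jointEigenspace {l : A →ₗ[ℂ] ℂ} {v : H} :
    v ∈ jointEigenspace A l ↔ ∀ T : A, (T : H →L[ℂ] H) v = l T • v := by
  simp [jointEigenspace]

theorem jointEigenspace_le_maxGenEigenspace (l : A →ₗ[ℂ] ℂ) (T : A) :
    jointEigenspace A l ≤ End.maxGenEigenspace ((T : H →L[ℂ] H) : End ℂ H) (l T) :=
  (iInf_le _ T).trans End.eigenspace_le_maxGenEigenspace

variable (A) in
theorem finite_setOf_jointEigenspace_ne_bot [FiniteDimensional ℂ H] :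
    {l : A →ₗ[ℂ] ℂ | jointEigenspace A l ≠ ⊥}.Finite := by
  let b := Module.finBasis ℂ A
  have hinj : Function.Injective fun (l : A →ₗ[ℂ] ℂ) i ↦ l (b i) := fun l l' h ↦
    b.ext fun i ↦ congrFun h i
  refine ((Set.Finite.pi fun i ↦
    End.finite_hasEigenvalue ((b i : H →L[ℂ] H) : End ℂ H)).preimage hinj.injOn).subset ?_
  intro l hl i _
  obtain ⟨v, hv, hv0⟩ := Submodule.exists_mem_ne_zero_of_ne_bot hl
  exact End.hasEigenvalue_of_hasEigenvector
    ⟨End.mem_eigenspace_iff.mpr (mem_jointEigenspace.mp hv (b i)), hv0⟩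

end JointEigenspace

theorem star_unitary_apply_ne_zero {H : Type*} [NormedAddCommGroup H] [InnerProductSpace ℂ H]
    [CompleteSpace H] (u : unitary (H →L[ℂ] H)) {x : H} (hx : x ≠ 0) :
    star (u : H →L[ℂ] H) x ≠ 0 := by
  intro h
  apply hx
  calc x = ((u : H →L[ℂ] H) * star (u : H →L[ℂ] H)) x := by
        rw [Unitary.mul_star_self_of_mem u.2]; rfl
    _ = 0 := show (u : H →L[ℂ] H) (star (u : H →L[ℂ] H) x) = 0 by rw [h, map_zero]

section Conjugation

variable {H : Type*} [NormedAddCommGroup H] [InnerProductSpace ℂ H] [CompleteSpace H]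
  {A : Subalgebra ℂ (H →L[ℂ] H)} {u : unitary (H →L[ℂ] H)}
  (hu : (fun T ↦ (u : H →L[ℂ] H) * T * star (u : H →L[ℂ] H)) '' A = A)

noncomputable def normalizingConj : A →ₗ[ℂ] A :=
  LinearMap.codRestrict (Subalgebra.toSubmodule A)
    (LinearMap.mulLeftRight ℂ ((u : H →L[ℂ] H), star (u : H →L[ℂ] H)) ∘ₗ
      (Subalgebra.toSubmodule A).subtype)
    fun T ↦ (hu ▸ Set.mem_image_of_mem _ T.2 :
      (u : H →L[ℂ] H) * T * star (u : H →L[ℂ] H) ∈ (A : Set (H →L[ℂ] H)))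

theorem coe_normalizingConj_apply (T : A) :
    (normalizingConj hu T : H →L[ℂ] H) = (u : H →L[ℂ] H) * T * star (u : H →L[ℂ] H) :=
  rfl

theorem normalizingConj_surjective : Function.Surjective (normalizingConj hu) := by
  rintro ⟨T, hT⟩
  obtain ⟨S, hS, rfl⟩ : T ∈ (fun T ↦ (u : H →L[ℂ] H) * T * star (u : H →L[ℂ] H)) '' A := by
    rwa [hu]
  exact ⟨⟨S, hS⟩, rfl⟩

theorem star_apply_mem_jointEigenspace {l : A →ₗ[ℂ] ℂ} {v : H}
    (hv : v ∈ jointEigenspace A l) :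
    star (u : H →L[ℂ] H) v ∈ jointEigenspace A (l ∘ₗ normalizingConj hu) := by
  refine mem_jointEigenspace.mpr fun T ↦ ?_
  calc (T : H →L[ℂ] H) (star (u : H →L[ℂ] H) v)
      = (star (u : H →L[ℂ] H) * ((u : H →L[ℂ] H) * T * star (u : H →L[ℂ] H))) v := by
        rw [← mul_assoc, ← mul_assoc, Unitary.star_mul_self_of_mem u.2, one_mul]
        rfl
    _ = star (u : H →L[ℂ] H) ((normalizingConj hu T : H →L[ℂ] H) v) := rfl
    _ = (l ∘ₗ normalizingConj hu) T • star (u : H →L[ℂ] H) v := by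
        rw [mem_jointEigenspace.mp hv, map_smul]
        rfl

end Conjugation

section Average

variable {G H : Type*} [Group G] [MeasurableSpace G]
  [NormedAddCommGroup H] [InnerProductSpace ℂ H] [CompleteSpace H]
  (π : G →* unitary (H →L[ℂ] H)) (P : H →L[ℂ] H) (μ : Measure G)

noncomputable def conjAverage : H →L[ℂ] H :=
  ∫ g, (π g : H →L[ℂ] H) * P * star (π g : H →L[ℂ] H) ∂μ

variable {π}

theorem integrable_conj [TopologicalSpace G] [OpensMeasurableSpace G] [CompactSpace G]
    [IsFiniteMeasureOnCompacts μ]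
    (hcont : Continuous fun g ↦ (π g : H →L[ℂ] H)) :
    Integrable (fun g ↦ (π g : H →L[ℂ] H) * P * star (π g : H →L[ℂ] H)) μ :=
  ((hcont.mul continuous_const).mul (continuous_star.comp hcont)).integrable_of_hasCompactSupport
    (.of_compactSpace _)

theorem commute_conjAverage [MeasurableMul G] [μ.IsMulLeftInvariant]
    (hint : Integrable (fun g ↦ (π g : H →L[ℂ] H) * P * star (π g : H →L[ℂ] H)) μ) (h : G) :
    Commute (π h : H →L[ℂ] H) (conjAverage π P μ) := by
  rw [commute_unitary_iff_star_right_conjugate (π h).2, conjAverage,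
    ← integral_const_mul_of_integrable hint, ← integral_mul_const_of_integrable (hint.const_mul _)]
  conv_rhs => rw [← integral_mul_left_eq_self _ h]
  congr with g
  simp [mul_assoc]

theorem inner_conjAverage
    (hint : Integrable (fun g ↦ (π g : H →L[ℂ] H) * P * star (π g : H →L[ℂ] H)) μ) (x y : H) :
    ⟪x, conjAverage π P μ y⟫_ℂ =
      ∫ g, ⟪star (π g : H →L[ℂ] H) x, P (star (π g : H →L[ℂ] H) y)⟫_ℂ ∂μ := by
  let L := (innerSL ℂ x).comp (ContinuousLinearMap.apply ℂ H y)
  refine (L.integral_comp_comm hint).symm.trans (integral_congr_ae (.of_forall fun g ↦ ?_))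
  simp [L, ContinuousLinearMap.star_eq_adjoint, ContinuousLinearMap.adjoint_inner_left]

theorem re_inner_conjAverage_self_pos [TopologicalSpace G] [OpensMeasurableSpace G]
    [CompactSpace G] [IsFiniteMeasureOnCompacts μ] [μ.IsOpenPosMeasure]
    (hcont : Continuous fun g ↦ (π g : H →L[ℂ] H))
    (hP : ∀ x, x ≠ 0 → 0 < RCLike.re ⟪x, P x⟫_ℂ) {x : H} (hx : x ≠ 0) :
    0 < RCLike.re ⟪x, conjAverage π P μ x⟫_ℂ := by
  have hφ : Continuous fun g ↦ ⟪star (π g : H →L[ℂ] H) x, P (star (π g : H →L[ℂ] H) x)⟫_ℂ := by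
    fun_prop
  rw [inner_conjAverage P μ (integrable_conj P μ hcont),
    ← integral_re (hφ.integrable_of_hasCompactSupport (.of_compactSpace _))]
  refine (RCLike.continuous_re.comp hφ).integral_pos_of_hasCompactSupport_nonneg_nonzero
    (.of_compactSpace _) (fun g ↦ (hP _ (star_unitary_apply_ne_zero _ hx)).le) (x := 1) ?_
  simpa using (hP x hx).ne'

end Average

theorem inner_eq_zero_of_forall_inner_star_apply_eq_zero {G H : Type*} [Group G]
    [TopologicalSpace G] [IsTopologicalGroup G] [CompactSpace G]
    [NormedAddCommGroup H] [InnerProductSpace ℂ H] [FiniteDimensional ℂ H]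
    (π : G →* unitary (H →L[ℂ] H)) (hcont : Continuous fun g ↦ (π g : H →L[ℂ] H))
    (hirr : ∀ W : Submodule ℂ H, (∀ g : G, ∀ v ∈ W, (π g : H →L[ℂ] H) v ∈ W) → W = ⊥ ∨ W = ⊤)
    {P : H →L[ℂ] H} (hP : ∀ x, x ≠ 0 → 0 < RCLike.re ⟪x, P x⟫_ℂ) {v w : H}
    (h : ∀ g, ⟪star (π g : H →L[ℂ] H) v, P (star (π g : H →L[ℂ] H) w)⟫_ℂ = 0) :
    ⟪v, w⟫_ℂ = 0 := by
  rcases eq_or_ne v 0 with rfl | hv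
  · exact inner_zero_left w
  have : Nontrivial H := ⟨v, 0, hv⟩
  borelize G
  let μ : Measure G := .haar
  have hint := integrable_conj P μ hcont
  obtain ⟨c, hc⟩ := End.exists_eq_smul_one_of_forall_commute
    (fun g ↦ ((π g : H →L[ℂ] H) : End ℂ H)) hirr
    (S := (conjAverage π P μ : End ℂ H))
    fun g ↦ (commute_conjAverage P μ hint g).map ContinuousLinearMap.toLinearMapRingHom
  have hS : ∀ y, conjAverage π P μ y = c • y := fun y ↦ LinearMap.congr_fun hc y
  have hc0 : c ≠ 0 := by
    rintro rfl
    simpa [hS] using re_inner_conjAverage_self_pos P μ hcont hP hv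
  have hcvw : c * ⟪v, w⟫_ℂ = 0 := by
    rw [← inner_smul_right, ← hS, inner_conjAverage P μ hint, funext h, integral_zero]
  exact (mul_eq_zero.mp hcvw).resolve_left hc0

theorem jointEigenspaces_orthogonal_general
    (G : Type*) [Group G] [TopologicalSpace G] [IsTopologicalGroup G] [CompactSpace G]
    (H : Type*) [NormedAddCommGroup H] [InnerProductSpace ℂ H] [FiniteDimensional ℂ H]
    (π : G →* unitary (H →L[ℂ] H))
    (hcont : Continuous fun g : G => (π g : H →L[ℂ] H))
    (hirr : ∀ U : Submodule ℂ H, (∀ g : G, ∀ v ∈ U, (π g : H →L[ℂ] H) v ∈ U) →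
      U = ⊥ ∨ U = ⊤)
    (A : Subalgebra ℂ (H →L[ℂ] H))
    (hnorm : ∀ g : G,
      (fun T : H →L[ℂ] H => (π g : H →L[ℂ] H) * T * ((π g)⁻¹ : unitary (H →L[ℂ] H))) '' A = A) :
    ∀ l m : A →ₗ[ℂ] ℂ, l ≠ m → ∀ v w : H,
      (∀ T : A, (T : H →L[ℂ] H) v = l T • v) →
      (∀ T : A, (T : H →L[ℂ] H) w = m T • w) →
      ⟪v, w⟫_ℂ = 0 := by
  intro l m hlm v w hv hw
  rcases eq_or_ne v 0 with rfl | hv0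
  · exact inner_zero_left w
  rcases eq_or_ne w 0 with rfl | hw0
  · exact inner_zero_right v
  obtain ⟨T₀, hT₀⟩ := Dual.exists_injOn_apply (finite_setOf_jointEigenspace_ne_bot A)
  let f : End ℂ H := (T₀ : H →L[ℂ] H)
  have hf : DirectSum.IsInternal f.maxGenEigenspace :=
    DirectSum.isInternal_submodule_of_iSupIndep_of_iSup_eq_top
      f.independent_maxGenEigenspace f.iSup_maxGenEigenspace_eq_top
  obtain ⟨P, hPorth, hPpos⟩ := hf.exists_inner_eq_zero_and_re_inner_self_pos
  refine inner_eq_zero_of_forall_inner_star_apply_eq_zero π hcont hirr hPpos fun g ↦ ?_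
  have hu : (fun T ↦ (π g : H →L[ℂ] H) * T * star (π g : H →L[ℂ] H)) '' A = A := by
    simpa only [← Unitary.star_eq_inv, Unitary.coe_star] using hnorm g
  have hv' := star_apply_mem_jointEigenspace hu (mem_jointEigenspace.mpr hv)
  have hw' := star_apply_mem_jointEigenspace hu (mem_jointEigenspace.mpr hw)
  have hne : l ∘ₗ normalizingConj hu ≠ m ∘ₗ normalizingConj hu := fun h ↦
    hlm ((LinearMap.cancel_right (normalizingConj_surjective hu)).mp h)
  -- `T₀` separates `Λ`, so the two transported vectors lie in distinct generalized eigenspaces.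
  refine hPorth _ _ (fun h ↦ hne (hT₀ ?_ ?_ h)) _ (jointEigenspace_le_maxGenEigenspace _ T₀ hv') _
    (jointEigenspace_le_maxGenEigenspace _ T₀ hw')
  · exact (Submodule.ne_bot_iff _).mpr ⟨_, hv', star_unitary_apply_ne_zero _ hv0⟩
  · exact (Submodule.ne_bot_iff _).mpr ⟨_, hw', star_unitary_apply_ne_zero _ hw0⟩

/-- Let `π` be a continuous irreducible unitary representation of a compact group
`G` on a finite dimensional complex Hilbert space `H`, and `A` an abelian
subalgebra of `End(H)` normalized by `π(G)` with trivial nilradical.  Then the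
distinct joint eigenspaces of `A` are pairwise orthogonal. -/
theorem jointEigenspaces_orthogonal
    (G : Type*) [Group G] [TopologicalSpace G] [IsTopologicalGroup G] [CompactSpace G]
    (H : Type*) [NormedAddCommGroup H] [InnerProductSpace ℂ H] [FiniteDimensional ℂ H]
    (π : G →* unitary (H →L[ℂ] H))
    (hcont : Continuous fun g : G => (π g : H →L[ℂ] H))
    (hirr : ∀ U : Submodule ℂ H, (∀ g : G, ∀ v ∈ U, (π g : H →L[ℂ] H) v ∈ U) →
      U = ⊥ ∨ U = ⊤)
    (A : Subalgebra ℂ (H →L[ℂ] H))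
    (habelian : ∀ S ∈ A, ∀ T ∈ A, S * T = T * S)
    (hnorm : ∀ g : G,
      (fun T : H →L[ℂ] H => (π g : H →L[ℂ] H) * T * ((π g)⁻¹ : unitary (H →L[ℂ] H))) '' A = A)
    (hred : ∀ T ∈ A, IsNilpotent T → T = 0) :
    ∀ l m : A →ₗ[ℂ] ℂ, l ≠ m → ∀ v w : H,
      (∀ T : A, (T : H →L[ℂ] H) v = l T • v) →
      (∀ T : A, (T : H →L[ℂ] H) w = m T • w) →
      ⟪v, w⟫_ℂ = 0 :=
  jointEigenspaces_orthogonal_general G H π hcont hirr A hnorm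
end

section
/- Every finite dimensional complex subalgebra of the algebra ℂ^Λ of all functions on a finite set Λ (with pointwise operations) is closed under complex conjugation. -/
/-- Every (finite dimensional) complex subalgebra of the algebra `ℂ^Λ` of all
functions on a finite set `Λ`, with pointwise operations, is closed under
complex conjugation. -/
theorem subalgebra_of_functions_on_finite_set_selfAdjoint
    (Λ : Type*) [Finite Λ] (A : Subalgebra ℂ (Λ → ℂ)) :
    ∀ f ∈ A, (fun l => starRingEnd ℂ (f l)) ∈ A := by
  intro f hf
  have hfin : (Set.range f).Finite := Set.finite_range f
  set s := hfin.toFinset with hs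
  set p := Lagrange.interpolate s id (starRingEnd ℂ) with hpdef
  have key : (fun l => starRingEnd ℂ (f l)) = Polynomial.aeval f p := by
    funext l
    have h1 : Polynomial.aeval f p l = Polynomial.aeval (f l) p :=
      (Polynomial.aeval_algHom_apply (Pi.evalAlgHom ℂ (fun _ => ℂ) l) f p).symm
    have h2 : Polynomial.aeval (f l) p = Polynomial.eval (f l) p := by
      simp [Polynomial.aeval_def, Polynomial.eval, - Polynomial.eval₂_id]
    have hmem : f l ∈ s := hfin.mem_toFinset.mpr ⟨l, rfl⟩
    have := Lagrange.eval_interpolate_at_node (v := id) (r := starRingEnd ℂ)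
      (Set.injOn_id _) hmem
    simp only [id] at this
    rw [h1, h2, this]
  rw [key]
  have : Polynomial.aeval (⟨f, hf⟩ : A) p ∈ (⊤ : Subalgebra ℂ A) := trivial
  have := (Polynomial.coe_aeval_mk_apply (x := f) (p := p) hf)
  rw [← this]
  exact (Polynomial.aeval (⟨f, hf⟩ : A) p).2
end
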